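/- arXiv:2507.06495 — 4 statements merged into one kernel-verified Lean document; each statement's English description precedes it below -/
import Mathlib

section
/- Let f : X → Y be an ε-isometry between metric spaces. Then there exists a map f' : Y → X such that (1) f' is a 4ε-isometry, (2) for all x ∈ X, d_X(f'(f(x)), x) ≤ 3ε, and (3) for all y ∈ Y, d_Y(f(f'(y)), y) ≤ ε. -/
/-- `f` is an `ε`-isometry: it distorts distances by at most `ε` and its image is `ε`-dense. -/
def IsEpsIsometry {X Y : Type*} [MetricSpace X] [MetricSpace Y] (f : X → Y) (ε : ℝ) : Prop :=
  (∀ a b : X, |dist (f a) (f b) - dist a b| ≤ ε) ∧ (∀ y : Y, ∃ x : X, dist (f x) y ≤ ε)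

theorem eps_inverse_exists {X Y : Type*} [MetricSpace X] [MetricSpace Y]
    (f : X → Y) (ε : ℝ) (hε : 0 < ε) (hf : IsEpsIsometry f ε) :
    ∃ f' : Y → X, IsEpsIsometry f' (4 * ε) ∧
      (∀ x : X, dist (f' (f x)) x ≤ 3 * ε) ∧
      (∀ y : Y, dist (f (f' y)) y ≤ ε) := by
  obtain ⟨hdist, hdense⟩ := hf
  choose f' hf' using hdense
  have key : ∀ x : X, dist (f' (f x)) x ≤ 2 * ε := by
    intro x
    have h1 := hf' (f x)
    have h2 := hdist (f' (f x)) x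
    have := abs_le.1 h2
    linarith [this.1, this.2]
  refine ⟨f', ⟨?_, ?_⟩, fun x => by linarith [key x], hf'⟩
  · intro a b
    have h1 := hf' a
    have h2 := hf' b
    have h3 := abs_le.1 (hdist (f' a) (f' b))
    have t1 : dist (f (f' a)) (f (f' b)) ≤ dist (f (f' a)) a + dist a b + dist b (f (f' b)) :=
      dist_triangle4 _ _ _ _
    have t2 : dist a b ≤ dist a (f (f' a)) + dist (f (f' a)) (f (f' b)) + dist (f (f' b)) b :=
      dist_triangle4 _ _ _ _
    rw [dist_comm a (f (f' a)), dist_comm (f (f' b)) b] at t2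
    rw [dist_comm b (f (f' b))] at t1
    rw [abs_le]
    constructor <;> linarith [h3.1, h3.2, dist_comm b (f (f' b))]
  · intro x
    exact ⟨f x, by linarith [key x]⟩
end

section
/- Let (X_n, d_n), (X_∞, d_∞) be compact metric spaces, f_n : X_n → X_∞ ε_n-isometries with ε_n → 0, and g^n : X_n → ℝ functions that are L-Lipschitz uniformly in n. Suppose g^n(f_n'(x)) → g^∞(x) for each x ∈ X_∞, where f_n' is an ε_n-inverse of f_n and g^∞ : X_∞ → ℝ. Then for each t > 0, Q_t g^n(x_n) → Q_t g^∞(x) whenever x_n ∈ X_n satisfy f_n(x_n) → x in X_∞. -/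
set_option maxHeartbeats 1000000


/-- `f'` is an `ε`-inverse of the `ε`-isometry `f`. -/
def IsEpsInverse {X Y : Type*} [MetricSpace X] [MetricSpace Y]
    (f : X → Y) (f' : Y → X) (ε : ℝ) : Prop :=
  IsEpsIsometry f' (4 * ε) ∧
  (∀ x : X, dist (f' (f x)) x ≤ 3 * ε) ∧
  (∀ y : Y, dist (f (f' y)) y ≤ ε)

/-- The Hopf--Lax semigroup `Q_t g(x) = inf_y ( g y + d(x,y)²/(2t) )`. -/
noncomputable def hopfLax {X : Type*} [MetricSpace X] (t : ℝ) (g : X → ℝ) (x : X) : ℝ :=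
  ⨅ y : X, (g y + (dist x y)^2 / (2 * t))

section Aux

open Filter Set

/-- Every compact metric space has a uniform distance bound. -/
lemma exists_dist_bound (Y : Type*) [MetricSpace Y] [CompactSpace Y] [Nonempty Y] :
    ∃ D : ℝ, 0 ≤ D ∧ ∀ a b : Y, dist a b ≤ D := by
  obtain ⟨C, hC⟩ := Metric.isBounded_iff.mp
    (isCompact_univ : IsCompact (Set.univ : Set Y)).isBounded
  inhabit Y
  refine ⟨C, ?_, fun a b => hC trivial trivial⟩
  exact le_trans (dist_nonneg (x := (default : Y)) (y := default)) (hC trivial trivial)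

lemma hopfLax_bddBelow {X : Type*} [MetricSpace X] [Nonempty X]
    (t : ℝ) (ht : 0 < t) (g : X → ℝ) (L : ℝ) (hL : 0 ≤ L)
    (hg : ∀ a b : X, |g a - g b| ≤ L * dist a b)
    (D : ℝ) (hD : ∀ a b : X, dist a b ≤ D) (x : X) :
    BddBelow (Set.range fun y => g y + (dist x y)^2 / (2 * t)) := by
  refine ⟨g x - L * D, ?_⟩
  rintro _ ⟨y, rfl⟩
  have h1 : |g x - g y| ≤ L * dist x y := hg x y
  have h2 : dist x y ≤ D := hD x y
  have h3 : g x - g y ≤ L * D := by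
    calc g x - g y ≤ |g x - g y| := le_abs_self _
      _ ≤ L * dist x y := h1
      _ ≤ L * D := by nlinarith [dist_nonneg (x := x) (y := y)]
  have h4 : 0 ≤ (dist x y)^2 / (2 * t) := by positivity
  simp only
  linarith

/-- Generic comparison of Hopf–Lax values over two different spaces. -/
lemma hopfLax_le_add {X Z : Type*} [MetricSpace X] [MetricSpace Z] [Nonempty X] [Nonempty Z]
    (t : ℝ) (gX : X → ℝ) (gZ : Z → ℝ) (x : X) (z : Z) (c : ℝ)
    (hbdd : BddBelow (Set.range fun y => gX y + (dist x y)^2 / (2 * t)))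
    (h : ∀ w : Z, ∃ y : X, gX y + (dist x y)^2 / (2 * t) ≤ gZ w + (dist z w)^2 / (2 * t) + c) :
    hopfLax t gX x ≤ hopfLax t gZ z + c := by
  have key : ∀ w : Z, hopfLax t gX x - c ≤ gZ w + (dist z w)^2 / (2 * t) := by
    intro w
    obtain ⟨y, hy⟩ := h w
    have : hopfLax t gX x ≤ gX y + (dist x y)^2 / (2 * t) := ciInf_le hbdd y
    linarith
  have : hopfLax t gX x - c ≤ hopfLax t gZ z := le_ciInf key
  linarith

end Aux

open Filter Set in
theorem hopfLax_GH_stability {X : ℕ → Type*} [∀ n, MetricSpace (X n)]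
    [∀ n, CompactSpace (X n)] [∀ n, Nonempty (X n)]
    {Y : Type*} [MetricSpace Y] [CompactSpace Y] [Nonempty Y]
    (f : ∀ n, X n → Y) (f' : ∀ n, Y → X n) (ε : ℕ → ℝ)
    (hf : ∀ n, IsEpsIsometry (f n) (ε n))
    (hf' : ∀ n, IsEpsInverse (f n) (f' n) (ε n))
    (hε : Filter.Tendsto ε Filter.atTop (nhds 0))
    (g : ∀ n, X n → ℝ) (gLim : Y → ℝ) (L : ℝ) (hL : 0 ≤ L)
    (hg : ∀ n, ∀ x y : X n, |g n x - g n y| ≤ L * dist x y)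
    (hconv : ∀ x : Y,
      Filter.Tendsto (fun n => g n (f' n x)) Filter.atTop (nhds (gLim x))) :
    ∀ t > (0:ℝ), ∀ (x : Y) (xs : ∀ n, X n),
      Filter.Tendsto (fun n => f n (xs n)) Filter.atTop (nhds x) →
      Filter.Tendsto (fun n => hopfLax t (g n) (xs n)) Filter.atTop
        (nhds (hopfLax t gLim x)) := by
  -- preliminaries
  have hεnn : ∀ n, 0 ≤ ε n := by
    intro n
    have := (hf n).1 (Classical.arbitrary _) (Classical.arbitrary _)
    simpa using le_trans (abs_nonneg _) this
  obtain ⟨D, hD0, hD⟩ := exists_dist_bound Y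
  -- distances between f'-images
  have hf'dist : ∀ n (a b : Y), dist (f' n a) (f' n b) ≤ dist a b + 4 * ε n := by
    intro n a b
    have := (hf' n).1.1 a b
    have := abs_le.mp this
    linarith [this.2]
  -- gLim is L-Lipschitz
  have hgLip : ∀ a b : Y, |gLim a - gLim b| ≤ L * dist a b := by
    intro a b
    have h1 : Tendsto (fun n => |g n (f' n a) - g n (f' n b)|) atTop
        (nhds |gLim a - gLim b|) := (((hconv a).sub (hconv b)).abs)
    have h2 : Tendsto (fun n => L * (dist a b + 4 * ε n)) atTop (nhds (L * dist a b)) := by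
      have : Tendsto (fun n => dist a b + 4 * ε n) atTop (nhds (dist a b)) := by
        have h := (hε.const_mul 4).const_add (dist a b)
        simpa using h
      simpa using this.const_mul L
    refine le_of_tendsto_of_tendsto' h1 h2 (fun n => ?_)
    calc |g n (f' n a) - g n (f' n b)| ≤ L * dist (f' n a) (f' n b) := hg n _ _
      _ ≤ L * (dist a b + 4 * ε n) := by
          nlinarith [hf'dist n a b, dist_nonneg (x := f' n a) (y := f' n b)]
  -- uniform convergence of g n ∘ f' n to gLim
  have hunif : ∀ η > (0:ℝ), ∀ᶠ n in atTop, ∀ z : Y,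
      |g n (f' n z) - gLim z| ≤ η * (1 + 6 * L) := by
    intro η hη
    obtain ⟨s, hsfin, hscov⟩ := Metric.totallyBounded_iff.mp (isCompact_univ : IsCompact (Set.univ : Set Y)).totallyBounded η hη
    have hev1 : ∀ᶠ n in atTop, ∀ w ∈ s, |g n (f' n w) - gLim w| ≤ η := by
      rw [Filter.eventually_all_finite hsfin]
      intro w _
      have := (hconv w)
      have : ∀ᶠ n in atTop, |g n (f' n w) - gLim w| < η := by
        have h := Metric.tendsto_atTop.mp (hconv w) η hη
        obtain ⟨N, hN⟩ := h
        refine Filter.eventually_atTop.mpr ⟨N, fun n hn => ?_⟩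
        simpa [Real.dist_eq] using hN n hn
      exact this.mono fun n hn => le_of_lt hn
    have hev2 : ∀ᶠ n in atTop, ε n ≤ η := by
      have := Metric.tendsto_atTop.mp hε η hη
      obtain ⟨N, hN⟩ := this
      refine Filter.eventually_atTop.mpr ⟨N, fun n hn => ?_⟩
      have := hN n hn
      rw [Real.dist_eq] at this
      have := (abs_le.mp (le_of_lt this)).2
      simpa using this
    filter_upwards [hev1, hev2] with n h1 h2 z
    obtain ⟨w, hw⟩ : ∃ w ∈ s, dist z w < η := by
      have := hscov (Set.mem_univ z)
      simp only [Set.mem_iUnion, Metric.mem_ball] at this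
      obtain ⟨w, hws, hd⟩ := this
      exact ⟨w, hws, hd⟩
    obtain ⟨hws, hdzw⟩ := hw
    have e1 : |g n (f' n z) - g n (f' n w)| ≤ L * (dist z w + 4 * ε n) := by
      calc |g n (f' n z) - g n (f' n w)| ≤ L * dist (f' n z) (f' n w) := hg n _ _
        _ ≤ L * (dist z w + 4 * ε n) := by
            nlinarith [hf'dist n z w, dist_nonneg (x := f' n z) (y := f' n w)]
    have e2 : |g n (f' n w) - gLim w| ≤ η := h1 w hws
    have e3 : |gLim w - gLim z| ≤ L * dist z w := by
      have := hgLip w z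
      rwa [dist_comm w z] at this
    have : |g n (f' n z) - gLim z| ≤
        |g n (f' n z) - g n (f' n w)| + |g n (f' n w) - gLim w| + |gLim w - gLim z| := by
      have := abs_sub_le (g n (f' n z)) (g n (f' n w)) (gLim z)
      have := abs_sub_le (g n (f' n w)) (gLim w) (gLim z)
      calc |g n (f' n z) - gLim z| ≤
          |g n (f' n z) - g n (f' n w)| + |g n (f' n w) - gLim z| :=
            abs_sub_le _ _ _
        _ ≤ |g n (f' n z) - g n (f' n w)| + (|g n (f' n w) - gLim w| + |gLim w - gLim z|) := by
            linarith [abs_sub_le (g n (f' n w)) (gLim w) (gLim z)]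
        _ = _ := by ring
    nlinarith [dist_nonneg (x := z) (y := w)]
  -- main argument
  intro t ht x xs hx
  rw [Metric.tendsto_atTop]
  intro δ hδ
  set K : ℝ := 2 + 15 * L + (9 * D + 7) / (2 * t) with hK
  have hKpos : 0 < K := by
    have h1 : 0 ≤ (9 * D + 7) / (2 * t) := by positivity
    have h2 : 0 ≤ 15 * L := by positivity
    rw [hK]
    linarith
  set η : ℝ := min 1 (δ / (2 * K)) with hηdef
  have hηpos : 0 < η := lt_min one_pos (by positivity)
  have hη1 : η ≤ 1 := min_le_left _ _
  have hηδ : η * K ≤ δ / 2 := by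
    have h1 : η ≤ δ / (2 * K) := min_le_right _ _
    calc η * K ≤ (δ / (2 * K)) * K :=
        mul_le_mul_of_nonneg_right h1 (le_of_lt hKpos)
      _ = δ / 2 := by field_simp
  -- eventually hypotheses
  have hev1 := hunif η hηpos
  have hev2 : ∀ᶠ n in atTop, ε n ≤ η := by
    obtain ⟨N, hN⟩ := Metric.tendsto_atTop.mp hε η hηpos
    refine Filter.eventually_atTop.mpr ⟨N, fun n hn => ?_⟩
    have := hN n hn
    rw [Real.dist_eq] at this
    have := (abs_le.mp (le_of_lt this)).2
    simpa using this
  have hev3 : ∀ᶠ n in atTop, dist (f n (xs n)) x ≤ η := by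
    obtain ⟨N, hN⟩ := Metric.tendsto_atTop.mp hx η hηpos
    exact Filter.eventually_atTop.mpr ⟨N, fun n hn => le_of_lt (hN n hn)⟩
  have key : ∀ᶠ n in atTop, dist (hopfLax t (g n) (xs n)) (hopfLax t gLim x) < δ := by
    filter_upwards [hev1, hev2, hev3] with n h1 h2 h3
    -- per-n setup
    obtain ⟨Dn, hDn0, hDn⟩ := exists_dist_bound (X n)
    have hbddn : BddBelow (Set.range fun y => g n y + (dist (xs n) y)^2 / (2 * t)) :=
      hopfLax_bddBelow t ht (g n) L hL (hg n) Dn hDn (xs n)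
    have hbddY : ∀ y₀ : Y, BddBelow (Set.range fun y => gLim y + (dist y₀ y)^2 / (2 * t)) :=
      fun y₀ => hopfLax_bddBelow t ht gLim L hL hgLip D hD y₀
    have hεη : ε n ≤ η := h2
    have hεnn' : 0 ≤ ε n := hεnn n
    have ht2 : 0 < 2 * t := by linarith
    set A := hopfLax t (g n) (xs n) with hA
    set B := hopfLax t gLim (f n (xs n)) with hB
    set C := hopfLax t gLim x with hC
    clear_value A B C
    -- (i)  A ≤ B + e1
    have e1 : A ≤ B + (η * (1 + 6 * L) + (4 * η * D + 4 * η) / (2 * t)) := by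
      rw [hA, hB]
      refine hopfLax_le_add t (g n) gLim (xs n) (f n (xs n)) _ hbddn (fun w => ?_)
      refine ⟨f' n w, ?_⟩
      have hgw : g n (f' n w) ≤ gLim w + η * (1 + 6 * L) :=
        by linarith [(abs_le.mp (h1 w)).2]
      have hd1 : dist (xs n) (f' n w) ≤ dist (f n (xs n)) w + 2 * ε n := by
        have ha := (abs_le.mp ((hf n).1 (xs n) (f' n w))).1
        have hb := (hf' n).2.2 w
        have htri := dist_triangle (f n (xs n)) w (f n (f' n w))
        rw [dist_comm w (f n (f' n w))] at htri
        linarith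
      have hdb : dist (f n (xs n)) w ≤ D := hD _ _
      have hsq : (dist (xs n) (f' n w))^2 ≤
          (dist (f n (xs n)) w)^2 + (4 * η * D + 4 * η) := by
        have h0 : (0:ℝ) ≤ dist (xs n) (f' n w) := dist_nonneg
        have h0' : (0:ℝ) ≤ dist (f n (xs n)) w := dist_nonneg
        nlinarith [sq_nonneg (dist (f n (xs n)) w + 2 * ε n)]
      have hdiv : (dist (xs n) (f' n w))^2 / (2*t) ≤
          (dist (f n (xs n)) w)^2 / (2*t) + (4 * η * D + 4 * η) / (2*t) := by
        rw [← add_div]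
        exact div_le_div_of_nonneg_right hsq ht2.le
      linarith
    -- (ii)  B ≤ A + e2
    have e2 : B ≤ A + (3 * L * η + η * (1 + 6 * L) + (2 * η * D + 3 * η) / (2 * t)) := by
      rw [hA, hB]
      refine hopfLax_le_add t gLim (g n) (f n (xs n)) (xs n) _ (hbddY _) (fun w => ?_)
      refine ⟨f n w, ?_⟩
      have hgw : gLim (f n w) ≤ g n w + (3 * L * η + η * (1 + 6 * L)) := by
        have ha : |g n (f' n (f n w)) - gLim (f n w)| ≤ η * (1 + 6 * L) := h1 (f n w)
        have hb : |g n (f' n (f n w)) - g n w| ≤ L * dist (f' n (f n w)) w := hg n _ _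
        have hc : dist (f' n (f n w)) w ≤ 3 * ε n := (hf' n).2.1 w
        have h1' := (abs_le.mp ha).1
        have h2' := (abs_le.mp hb).2
        have h3' := (abs_le.mp hb).1
        have hd' : dist (f' n (f n w)) w ≤ 3 * η := by linarith
        nlinarith [dist_nonneg (x := f' n (f n w)) (y := w)]
      have hd1 : dist (f n (xs n)) (f n w) ≤ dist (xs n) w + ε n :=
        by linarith [(abs_le.mp ((hf n).1 (xs n) w)).2]
      have hdxb : dist (xs n) w ≤ D + 1 := by
        have := (abs_le.mp ((hf n).1 (xs n) w)).1
        have := hD (f n (xs n)) (f n w)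
        linarith
      have hsq : (dist (f n (xs n)) (f n w))^2 ≤
          (dist (xs n) w)^2 + (2 * η * D + 3 * η) := by
        have h0 : (0:ℝ) ≤ dist (f n (xs n)) (f n w) := dist_nonneg
        have h0' : (0:ℝ) ≤ dist (xs n) w := dist_nonneg
        nlinarith
      have hdiv : (dist (f n (xs n)) (f n w))^2 / (2*t) ≤
          (dist (xs n) w)^2 / (2*t) + (2 * η * D + 3 * η) / (2*t) := by
        rw [← add_div]
        exact div_le_div_of_nonneg_right hsq ht2.le
      linarith
    -- (iii) |B - C| ≤ 3 D η / (2t)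
    have hxd : dist (f n (xs n)) x ≤ η := h3
    have e3a : B ≤ C + (3 * D * η) / (2 * t) := by
      rw [hB, hC]
      refine hopfLax_le_add t gLim gLim (f n (xs n)) x _ (hbddY _) (fun w => ?_)
      refine ⟨w, ?_⟩
      have hd1 : dist (f n (xs n)) w ≤ dist x w + η := by
        have := dist_triangle (f n (xs n)) x w
        linarith
      have hdb : dist x w ≤ D := hD _ _
      have hη' : η ≤ D + 1 := by
        linarith
      have hsq : (dist (f n (xs n)) w)^2 ≤ (dist x w)^2 + 3 * D * η := by
        have h0 : (0:ℝ) ≤ dist (f n (xs n)) w := dist_nonneg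
        have h0' : (0:ℝ) ≤ dist x w := dist_nonneg
        have hdfb : dist (f n (xs n)) w ≤ D := hD _ _
        nlinarith
      have hdiv : (dist (f n (xs n)) w)^2 / (2*t) ≤
          (dist x w)^2 / (2*t) + (3 * D * η) / (2*t) := by
        rw [← add_div]
        exact div_le_div_of_nonneg_right hsq ht2.le
      linarith
    have e3b : C ≤ B + (3 * D * η) / (2 * t) := by
      rw [hB, hC]
      refine hopfLax_le_add t gLim gLim x (f n (xs n)) _ (hbddY _) (fun w => ?_)
      refine ⟨w, ?_⟩
      have hd1 : dist x w ≤ dist (f n (xs n)) w + η := by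
        have := dist_triangle x (f n (xs n)) w
        rw [dist_comm x (f n (xs n))] at this
        linarith
      have hsq : (dist x w)^2 ≤ (dist (f n (xs n)) w)^2 + 3 * D * η := by
        have h0 : (0:ℝ) ≤ dist x w := dist_nonneg
        have h0' : (0:ℝ) ≤ dist (f n (xs n)) w := dist_nonneg
        have hdfb : dist (f n (xs n)) w ≤ D := hD _ _
        have hdb : dist x w ≤ D := hD _ _
        nlinarith
      have hdiv : (dist x w)^2 / (2*t) ≤
          (dist (f n (xs n)) w)^2 / (2*t) + (3 * D * η) / (2*t) := by
        rw [← add_div]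
        exact div_le_div_of_nonneg_right hsq ht2.le
      linarith
    -- combine
    rw [Real.dist_eq, abs_sub_lt_iff]
    have hKsum : η * (1 + 6 * L) + (4 * η * D + 4 * η) / (2 * t)
        + (3 * L * η + η * (1 + 6 * L) + (2 * η * D + 3 * η) / (2 * t))
        + (3 * D * η) / (2 * t) ≤ η * K := by
      rw [hK]
      have : (4 * η * D + 4 * η) / (2 * t) + (2 * η * D + 3 * η) / (2 * t)
          + (3 * D * η) / (2 * t) = η * ((9 * D + 7) / (2 * t)) := by
        field_simp
        ring
      linarith [this]
    clear_value K η
    have hη0 : 0 ≤ η := hηpos.le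
    have p1 : 0 ≤ η * (1 + 6 * L) := mul_nonneg hη0 (by linarith)
    have p2 : 0 ≤ 3 * L * η := by nlinarith
    have p3 : 0 ≤ (4 * η * D + 4 * η) / (2 * t) := div_nonneg (by nlinarith) ht2.le
    have p4 : 0 ≤ (2 * η * D + 3 * η) / (2 * t) := div_nonneg (by nlinarith) ht2.le
    constructor
    · -- A - C < δ
      have : A - C ≤ η * K := by linarith
      linarith [hηδ, hδ]
    · -- C - A < δ
      have : C - A ≤ η * K := by linarith
      linarith [hηδ, hδ]
  exact Filter.eventually_atTop.mp key
end

section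
/- Let f_n : X_n → X_∞ be ε_n-isometries with ε_n → 0 between compact metric spaces, f_n' Borel ε_n-inverses, and h_n : X_n → ℝ equi-Lipschitz functions (with common constant L) such that h_n ∘ f_n' converges uniformly on X_∞ to a function h : X_∞ → ℝ. Let ν_n be Borel probability measures on X_n with (f_n)_# ν_n → ν_∞ weakly on X_∞. Then ∫_{X_n} h_n dν_n → ∫_{X_∞} h dν_∞ as n → ∞. -/
open MeasureTheory

theorem integral_GH_stability {X : ℕ → Type*} [∀ n, MetricSpace (X n)]
    [∀ n, CompactSpace (X n)]
    [∀ n, MeasurableSpace (X n)] [∀ n, BorelSpace (X n)]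
    {Y : Type*} [MetricSpace Y] [CompactSpace Y]
    [MeasurableSpace Y] [BorelSpace Y]
    (f : ∀ n, X n → Y) (f' : ∀ n, Y → X n) (ε : ℕ → ℝ)
    (hf : ∀ n, IsEpsIsometry (f n) (ε n))
    (hfm : ∀ n, Measurable (f n))
    (hf' : ∀ n, IsEpsInverse (f n) (f' n) (ε n))
    (hf'm : ∀ n, Measurable (f' n))
    (hε : Filter.Tendsto ε Filter.atTop (nhds 0))
    (h : ∀ n, X n → ℝ) (hLim : Y → ℝ) (L : NNReal)
    (hlip : ∀ n, LipschitzWith L (h n))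
    (hunif : TendstoUniformly (fun n x => h n (f' n x)) hLim Filter.atTop)
    (ν : ∀ n, Measure (X n)) [∀ n, IsProbabilityMeasure (ν n)]
    (νLim : Measure Y) [IsProbabilityMeasure νLim]
    (hweak : ∀ φ : Y → ℝ, Continuous φ →
      Filter.Tendsto (fun n => ∫ y, φ y ∂((ν n).map (f n))) Filter.atTop
        (nhds (∫ y, φ y ∂νLim))) :
    Filter.Tendsto (fun n => ∫ x, h n x ∂(ν n)) Filter.atTop
      (nhds (∫ y, hLim y ∂νLim)) := by
  obtain ⟨y0⟩ : Nonempty Y := by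
    by_contra hY
    rw [not_nonempty_iff] at hY
    have h1 := measure_univ (μ := νLim)
    simp [Set.univ_eq_empty_iff.2 hY] at h1
  have hεnonneg : ∀ n, 0 ≤ ε n := fun n => by
    obtain ⟨x, hx⟩ := (hf n).2 y0
    exact le_trans dist_nonneg hx
  -- hLim is Lipschitz, hence continuous
  have hlipLim : LipschitzWith L hLim := by
    rw [lipschitzWith_iff_dist_le_mul]
    intro y y'
    have h1 : Filter.Tendsto (fun n => dist (h n (f' n y)) (h n (f' n y')))
        Filter.atTop (nhds (dist (hLim y) (hLim y'))) :=
      (hunif.tendsto_at y).dist (hunif.tendsto_at y')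
    have h2 : Filter.Tendsto (fun n => (L : ℝ) * (dist y y' + 4 * ε n))
        Filter.atTop (nhds ((L : ℝ) * dist y y')) := by
      have h3 := ((hε.const_mul (4:ℝ)).const_add (dist y y')).const_mul (L : ℝ)
      simpa using h3
    refine le_of_tendsto_of_tendsto' h1 h2 fun n => ?_
    calc dist (h n (f' n y)) (h n (f' n y'))
        ≤ (L : ℝ) * dist (f' n y) (f' n y') := (hlip n).dist_le_mul _ _
      _ ≤ (L : ℝ) * (dist y y' + 4 * ε n) := by
          apply mul_le_mul_of_nonneg_left _ L.coe_nonneg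
          have h4 := abs_le.1 (((hf' n).1).1 y y')
          linarith [h4.2]
  have hcont : Continuous hLim := hlipLim.continuous
  -- integrability
  have hInt1 : ∀ n, Integrable (h n) (ν n) := fun n =>
    integrableOn_univ.mp (((hlip n).continuous.continuousOn).integrableOn_compact isCompact_univ)
  have hInt2 : ∀ n, Integrable (fun x => hLim (f n x)) (ν n) := fun n => by
    have : IsProbabilityMeasure ((ν n).map (f n)) := Measure.isProbabilityMeasure_map (hfm n).aemeasurable
    exact (integrable_map_measure hcont.aestronglyMeasurable (hfm n).aemeasurable).mp
      (integrableOn_univ.mp ((hcont.continuousOn).integrableOn_compact isCompact_univ))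
  -- the pushforward integrals converge
  have hA : Filter.Tendsto (fun n => ∫ x, hLim (f n x) ∂(ν n)) Filter.atTop
      (nhds (∫ y, hLim y ∂νLim)) := by
    have key2 : ∀ n, ∫ y, hLim y ∂((ν n).map (f n)) = ∫ x, hLim (f n x) ∂(ν n) :=
      fun n => integral_map (hfm n).aemeasurable hcont.aestronglyMeasurable
    simpa [key2] using hweak hLim hcont
  -- the difference tends to zero
  have hB : Filter.Tendsto (fun n => (∫ x, h n x ∂(ν n)) - ∫ x, hLim (f n x) ∂(ν n))
      Filter.atTop (nhds 0) := by
    rw [NormedAddCommGroup.tendsto_nhds_zero]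
    intro δ hδ
    have hε' : ∀ᶠ n in Filter.atTop, 3 * (L : ℝ) * ε n < δ / 2 := by
      have h5 : Filter.Tendsto (fun n => 3 * (L : ℝ) * ε n) Filter.atTop (nhds 0) := by
        simpa using hε.const_mul (3 * (L : ℝ))
      exact h5.eventually (gt_mem_nhds (by linarith))
    have hu : ∀ᶠ n in Filter.atTop, ∀ y, dist (hLim y) (h n (f' n y)) < δ / 2 :=
      (Metric.tendstoUniformly_iff.1 hunif) (δ / 2) (by linarith)
    filter_upwards [hε', hu] with n h1 h2
    have pointwise : ∀ x, ‖h n x - hLim (f n x)‖ ≤ 3 * (L : ℝ) * ε n + δ / 2 := by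
      intro x
      have e1 : dist (h n x) (h n (f' n (f n x))) ≤ (L : ℝ) * dist x (f' n (f n x)) :=
        (hlip n).dist_le_mul _ _
      have e2 : dist x (f' n (f n x)) ≤ 3 * ε n := by
        rw [dist_comm]; exact (hf' n).2.1 x
      have e3 : dist (hLim (f n x)) (h n (f' n (f n x))) < δ / 2 := h2 (f n x)
      have e4 : (L : ℝ) * dist x (f' n (f n x)) ≤ (L : ℝ) * (3 * ε n) :=
        mul_le_mul_of_nonneg_left e2 L.coe_nonneg
      rw [Real.norm_eq_abs]
      rw [Real.dist_eq] at e1 e3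
      have := abs_sub_le (h n x) (h n (f' n (f n x))) (hLim (f n x))
      rw [abs_sub_comm (h n (f' n (f n x))) (hLim (f n x))] at this
      nlinarith
    calc ‖(∫ x, h n x ∂(ν n)) - ∫ x, hLim (f n x) ∂(ν n)‖
        = ‖∫ x, (h n x - hLim (f n x)) ∂(ν n)‖ := by
          rw [integral_sub (hInt1 n) (hInt2 n)]
      _ ≤ (3 * (L : ℝ) * ε n + δ / 2) * ((ν n) Set.univ).toReal :=
          norm_integral_le_of_norm_le_const (Filter.Eventually.of_forall pointwise)
      _ = 3 * (L : ℝ) * ε n + δ / 2 := by simp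
      _ < δ := by linarith
  have := hB.add hA
  simpa using this
end

section
/- Let (X, d) be a compact geodesic metric space and g : X → ℝ Lipschitz. Then the Hopf–Lax semigroup satisfies the semigroup property: Q_{s+t} g = Q_s (Q_t g) for all s, t > 0. -/
/-- A geodesic metric space: every pair of points is joined by a constant-speed geodesic. -/
def IsGeodesicSpace (X : Type*) [MetricSpace X] : Prop :=
  ∀ x y : X, ∃ γ : ℝ → X, γ 0 = x ∧ γ 1 = y ∧
    ∀ s ∈ Set.Icc (0:ℝ) 1, ∀ t ∈ Set.Icc (0:ℝ) 1,
      dist (γ s) (γ t) = |s - t| * dist x y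

private lemma hopfLax_aux_div (a b s t : ℝ) (hs : 0 < s) (ht : 0 < t) :
    (a + b)^2 / (2*(s+t)) ≤ a^2/(2*s) + b^2/(2*t) := by
  rw [div_add_div _ _ (by positivity) (by positivity),
    div_le_div_iff₀ (by positivity) (by positivity)]
  nlinarith [sq_nonneg (t*a - s*b)]

theorem hopfLax_semigroup {X : Type*} [MetricSpace X] [CompactSpace X] [Nonempty X]
    (hgeo : IsGeodesicSpace X) (g : X → ℝ) (L : NNReal) (hg : LipschitzWith L g) :
    ∀ s > (0:ℝ), ∀ t > (0:ℝ), ∀ x : X,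
      hopfLax (s + t) g x = hopfLax s (hopfLax t g) x := by
  intro s hs t ht x
  have hst : (0:ℝ) < s + t := by linarith
  obtain ⟨m, hm⟩ : ∃ m : X, ∀ y, g m ≤ g y := by
    obtain ⟨m, -, hm⟩ := isCompact_univ.exists_isMinOn Set.univ_nonempty
      hg.continuous.continuousOn
    exact ⟨m, fun y => hm (Set.mem_univ y)⟩
  have hbdd : ∀ (c : X) (r : ℝ), 0 < r →
      BddBelow (Set.range fun y => g y + dist c y ^ 2 / (2*r)) := by
    intro c r hr
    refine ⟨g m, ?_⟩
    rintro _ ⟨y, rfl⟩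
    have h1 := hm y
    have h2 : 0 ≤ dist c y ^ 2 / (2*r) := by positivity
    simp only
    linarith
  have hQlb : ∀ (r : ℝ), 0 < r → ∀ z : X, g m ≤ hopfLax r g z := by
    intro r hr z
    refine le_ciInf fun y => ?_
    have h1 := hm y
    have h2 : 0 ≤ dist z y ^ 2 / (2*r) := by positivity
    linarith
  have hbdd2 : BddBelow (Set.range fun z => hopfLax t g z + dist x z ^ 2 / (2*s)) := by
    refine ⟨g m, ?_⟩
    rintro _ ⟨z, rfl⟩
    have h1 := hQlb t ht z
    have h2 : 0 ≤ dist x z ^ 2 / (2*s) := by positivity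
    simp only
    linarith
  apply le_antisymm
  · -- Q_{s+t} g x ≤ Q_s (Q_t g) x
    refine le_ciInf fun z => ?_
    rw [← sub_le_iff_le_add]
    refine le_ciInf fun y => ?_
    rw [sub_le_iff_le_add]
    have h1 : hopfLax (s+t) g x ≤ g y + dist x y ^ 2 / (2*(s+t)) :=
      ciInf_le (hbdd x (s+t) hst) y
    have h2 : dist x y ^ 2 / (2*(s+t)) ≤ (dist x z + dist z y)^2 / (2*(s+t)) := by
      apply div_le_div_of_nonneg_right _ (by positivity)
      · exact pow_le_pow_left₀ dist_nonneg (dist_triangle x z y) 2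
    have h3 := hopfLax_aux_div (dist x z) (dist z y) s t hs ht
    linarith
  · -- Q_s (Q_t g) x ≤ Q_{s+t} g x
    refine le_ciInf fun y => ?_
    obtain ⟨γ, h0, h1, hγ⟩ := hgeo x y
    set θ : ℝ := s / (s+t) with hθdef
    have hθmem : θ ∈ Set.Icc (0:ℝ) 1 :=
      ⟨by positivity, by rw [div_le_one hst]; linarith⟩
    have h0mem : (0:ℝ) ∈ Set.Icc (0:ℝ) 1 := ⟨le_refl 0, zero_le_one⟩
    have h1mem : (1:ℝ) ∈ Set.Icc (0:ℝ) 1 := ⟨zero_le_one, le_refl 1⟩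
    set z := γ θ with hz
    have hxz : dist x z = θ * dist x y := by
      have h := hγ 0 h0mem θ hθmem
      rw [h0, zero_sub, abs_neg, abs_of_nonneg hθmem.1] at h
      exact h
    have hzy : dist z y = (1 - θ) * dist x y := by
      have h := hγ θ hθmem 1 h1mem
      rw [h1, abs_of_nonpos (by linarith [hθmem.2]), neg_sub] at h
      exact h
    have key : dist z y ^ 2 / (2*t) + dist x z ^ 2 / (2*s)
        = dist x y ^ 2 / (2*(s+t)) := by
      rw [hxz, hzy, hθdef]
      field_simp
      ring
    have hA : hopfLax s (hopfLax t g) x ≤ hopfLax t g z + dist x z ^ 2 / (2*s) :=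
      ciInf_le hbdd2 z
    have hB : hopfLax t g z ≤ g y + dist z y ^ 2 / (2*t) :=
      ciInf_le (hbdd z t ht) y
    linarith
end
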